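/- arXiv:2306.10009 — 5 statements merged into one kernel-verified Lean document; each statement's English description precedes it below -/
import Mathlib

section
/- Let G = ⟨N, E, L, root⟩ be an egraph and let rep : N → N satisfy conditions (a) and (b) of admissibility (one representative per class, with ρ_rep = ρ_root), but suppose the graph G_rep = ⟨N, {(n, rep(c)) | n ∈ N, c a child of n}⟩ contains a directed cycle. Then there exists no function t mapping each node of N to a finite term over Σ and the variables such that t(n) = L(n) for every node with deg(n) = 0 and t(n) = L(n)(t(rep(n[1])), …, t(rep(n[deg(n)]))) for every node with deg(n) > 0. (This is the 'only if' direction of the theorem that term extraction from an egraph terminates exactly for admissible representative functions.) -/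
inductive Term (Sym Var : Type) : Type where
  | var : Var → Term Sym Var
  | app : Sym → List (Term Sym Var) → Term Sym Var

namespace Term

inductive HasVar {Sym Var : Type} (v : Var) : Term Sym Var → Prop where
  | var : HasVar v (Term.var v)
  | app {f : Sym} {args : List (Term Sym Var)} {t : Term Sym Var} :
      t ∈ args → HasVar v t → HasVar v (Term.app f args)

/-- A term is ground if it contains no variables. -/
def Ground {Sym Var : Type} (t : Term Sym Var) : Prop := ∀ v : Var, ¬ HasVar v t

/-- `ImmSub s t` : `s` is an immediate subterm of `t`. -/
def ImmSub {Sym Var : Type} (s t : Term Sym Var) : Prop :=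
  ∃ (f : Sym) (args : List (Term Sym Var)), t = Term.app f args ∧ s ∈ args

/-- Evaluation of a term in a Σ-structure with domain `D`, interpretation `I` of
function symbols, and valuation `ρ` of the variables (treated as fresh constants). -/
def eval {Sym Var D : Type} (I : Sym → List D → D) (ρ : Var → D) : Term Sym Var → D
  | .var v => ρ v
  | .app f args => I f (args.attach.map fun t => eval I ρ t.1)
  termination_by t => sizeOf t
  decreasing_by
    have := List.sizeOf_lt_of_mem t.2
    simp only [Term.app.sizeOf_spec]
    omega

/-- Height of a term: leaves have height 1; a non-leaf has height one more than the
maximum height of its immediate subterms. -/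
def height {Sym Var : Type} : Term Sym Var → ℕ
  | .var _ => 1
  | .app _ args => 1 + (args.attach.map fun t => height t.1).foldr max 0
  termination_by t => sizeOf t
  decreasing_by
    have := List.sizeOf_lt_of_mem t.2
    simp only [Term.app.sizeOf_spec]
    omega

end Term

/-- An egraph over a functional signature `Sym` with variables `Var`. -/
structure EGraph (Sym Var : Type) where
  N : Type
  finN : Finite N
  children : N → List N
  label : N → Sym ⊕ Var
  root : N → N
  /-- `⟨N, E⟩` is a DAG. -/
  dag : ∀ n : N, ¬ Relation.TransGen (fun a b : N => a ∈ children b) n n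
  /-- only leaves may be labeled by variables. -/
  varLeaf : ∀ (n : N) (v : Var), label n = Sum.inr v → children n = []
  /-- `ρ_root` is closed under congruence. -/
  congrClosed : ∀ n n' : N, label n = label n' → children n ≠ [] →
    List.Forall₂ (fun a b => root a = root b) (children n) (children n') →
    root n = root n'

theorem wf_of_acyclic {α : Type} [Finite α] {r : α → α → Prop}
    (h : ∀ a, ¬ Relation.TransGen r a a) : WellFounded r := by
  have htg : WellFounded (Relation.TransGen r) := by
    haveI : IsIrrefl α (Relation.TransGen r) := ⟨h⟩
    haveI : IsTrans α (Relation.TransGen r) :=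
      ⟨fun _ _ _ hab hbc => Relation.TransGen.trans hab hbc⟩
    exact Finite.wellFounded_of_trans_of_irrefl _
  exact Subrelation.wf (fun {a b} hab => Relation.TransGen.single hab) htg

namespace EGraph

variable {Sym Var : Type}

/-- The term of a node. -/
noncomputable def term (G : EGraph Sym Var) : G.N → Term Sym Var :=
  haveI := G.finN
  (wf_of_acyclic G.dag).fix fun n rec =>
    match G.label n with
    | Sum.inr v => Term.var v
    | Sum.inl f => Term.app f ((G.children n).attach.map fun c => rec c.1 c.2)

/-- The edge relation of the graph `G_rep`: `repEdge G rep n m` iff `m = rep c`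
for some child `c` of `n`. -/
def repEdge (G : EGraph Sym Var) (rep : G.N → G.N) (n m : G.N) : Prop :=
  ∃ c ∈ G.children n, m = rep c

/-- An admissible representative function: (a) one representative per class,
(b) `ρ_rep = ρ_root`, (c) `G_rep` is acyclic. -/
structure Admissible (G : EGraph Sym Var) (rep : G.N → G.N) : Prop where
  rep_mem : ∀ n, G.root (rep n) = G.root n
  rep_class : ∀ n n', G.root n = G.root n' ↔ rep n = rep n'
  acyclic : ∀ n, ¬ Relation.TransGen (G.repEdge rep) n n

/-- Extraction of the term of a node relative to an admissible representative
function, by well-founded recursion on `G_rep`. -/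
noncomputable def toexpr (G : EGraph Sym Var) (rep : G.N → G.N)
    (h : G.Admissible rep) : G.N → Term Sym Var :=
  haveI := G.finN
  (wf_of_acyclic (r := Function.swap (G.repEdge rep))
      (fun a hta => h.acyclic a hta.swap)).fix
    fun n rec =>
      match G.label n with
      | Sum.inr v => Term.var v
      | Sum.inl f =>
          Term.app f ((G.children n).attach.map fun c => rec (rep c.1) ⟨c.1, c.2, rfl⟩)

/-- Satisfaction of `toformula(rep, S)` in a Σ-structure: all its equality literals
`toexpr(rep n) ≐ toexpr(n)` (for `n ∉ S` not a representative) hold. -/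
def SatFormula {D : Type} (G : EGraph Sym Var) (rep : G.N → G.N) (h : G.Admissible rep)
    (S : Set G.N) (I : Sym → List D → D) (ρ : Var → D) : Prop :=
  ∀ n, n ≠ rep n → n ∉ S →
    Term.eval I ρ (G.toexpr rep h (rep n)) = Term.eval I ρ (G.toexpr rep h n)

/-- The variable `v` occurs in the formula `toformula(rep, S)`. -/
def OccursIn (G : EGraph Sym Var) (rep : G.N → G.N) (h : G.Admissible rep)
    (S : Set G.N) (v : Var) : Prop :=
  ∃ n, n ≠ rep n ∧ n ∉ S ∧
    ((G.toexpr rep h (rep n)).HasVar v ∨ (G.toexpr rep h n).HasVar v)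

/-- Constructively ground nodes. -/
inductive CGround (G : EGraph Sym Var) : G.N → Prop where
  | ground {n : G.N} : (G.term n).Ground → CGround G n
  | app {n : G.N} (w : (c : G.N) → c ∈ G.children n → G.N) :
      G.children n ≠ [] →
      (∀ c hc, G.root (w c hc) = G.root c) →
      (∀ c hc, CGround G (w c hc)) →
      CGround G n

/-- A class is ground if it contains a c-ground node. -/
def GroundClass (G : EGraph Sym Var) (n : G.N) : Prop :=
  ∃ m, G.root m = G.root n ∧ G.CGround m

/-- A representative function is maximally ground if representatives of ground
classes are c-ground. -/
def MaxGround (G : EGraph Sym Var) (rep : G.N → G.N) : Prop :=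
  ∀ n, G.GroundClass n → G.CGround (rep n)

/-- Edge relation of the graph `⟨N, E_r⟩` for a partial representative function. -/
def pEdge (G : EGraph Sym Var) (r : G.N → Option G.N) (n m : G.N) : Prop :=
  ∃ c ∈ G.children n, r c = some m

/-- Admissible partial representative functions. -/
structure PAdmissible (G : EGraph Sym Var) (r : G.N → Option G.N) : Prop where
  classCond : ∀ n : G.N, r n ≠ none → ∀ m : G.N, (G.root m = G.root n ↔ r m = r n)
  acyclic : ∀ n, ¬ Relation.TransGen (G.pEdge r) n n
  defined_children : ∀ n m : G.N, r m = some n → ∀ c ∈ G.children n, r c ≠ none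

/-- Class frontiers of a node. -/
inductive CFrontier (G : EGraph Sym Var) (n : G.N) : Set G.N → Prop where
  | base : CFrontier G n {c | c ∈ G.children n}
  | classSwap {Fr : Set G.N} {m c : G.N} : CFrontier G n Fr → m ∈ Fr →
      G.root c = G.root m → CFrontier G n ((Fr ∪ {c}) \ {m})
  | expand {Fr : Set G.N} {m : G.N} : CFrontier G n Fr → m ∈ Fr →
      G.children m ≠ [] → CFrontier G n ((Fr ∪ {c | c ∈ G.children m}) \ {m})

end EGraph

lemma le_foldr_max {a : ℕ} {l : List ℕ} (h : a ∈ l) : a ≤ l.foldr max 0 := by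
  induction l with
  | nil => cases h
  | cons b l ih =>
    rcases List.mem_cons.mp h with rfl | h
    · exact le_max_left _ _
    · exact le_trans (ih h) (le_max_right _ _)

lemma height_lt_of_mem {Sym Var : Type} {s : Term Sym Var} {f : Sym}
    {args : List (Term Sym Var)} (h : s ∈ args) :
    s.height < (Term.app f args).height := by
  rw [Term.height]
  have : s.height ∈ args.attach.map fun t => t.1.height :=
    List.mem_map.mpr ⟨⟨s, h⟩, List.mem_attach _ _, rfl⟩
  have := le_foldr_max this
  omega

/-- if `rep` satisfies conditions (a) and (b) of admissibility but `G_rep`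
contains a directed cycle, then no extraction function `t` satisfying the recurrence
`t(n) = L(n)` for leaves and `t(n) = L(n)(t(rep(n[1])), …, t(rep(n[deg n])))` exists. -/
theorem no_extraction_of_cycle {Sym Var : Type} (G : EGraph Sym Var)
    (rep : G.N → G.N)
    (hmem : ∀ n, G.root (rep n) = G.root n)
    (hclass : ∀ n n', G.root n = G.root n' ↔ rep n = rep n')
    (hcycle : ∃ n, Relation.TransGen (G.repEdge rep) n n) :
    ¬ ∃ t : G.N → Term Sym Var,
        (∀ (n : G.N) (v : Var), G.label n = Sum.inr v → t n = Term.var v) ∧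
        (∀ (n : G.N) (f : Sym), G.label n = Sum.inl f →
          t n = Term.app f ((G.children n).map fun c => t (rep c))) := by
  rintro ⟨t, hvar, happ⟩
  obtain ⟨n, hn⟩ := hcycle
  have key : ∀ {a b : G.N}, G.repEdge rep a b → (t b).height < (t a).height := by
    rintro a b ⟨c, hc, rfl⟩
    cases hl : G.label a with
    | inr v =>
      exfalso; rw [G.varLeaf a v hl] at hc; exact List.not_mem_nil hc
    | inl f =>
      rw [happ a f hl]
      exact height_lt_of_mem (List.mem_map.mpr ⟨c, hc, rfl⟩)
  have main : ∀ {a b : G.N}, Relation.TransGen (G.repEdge rep) a b →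
      (t b).height < (t a).height := by
    intro a b h
    induction h with
    | single h => exact key h
    | tail _ h ih => exact lt_trans (key h) ih
  exact absurd (main hn) (lt_irrefl _)
end

section
/- Let φ be a quantifier-free conjunction of equality literals over Σ, let G be an egraph that represents φ, and let rep be an admissible representative function for G. Then the formula toformula(rep, ∅) is logically equivalent to φ: every Σ-structure (with free variables interpreted as fresh constants) satisfies toformula(rep, ∅) if and only if it satisfies φ. -/
section Helpers

variable {Sym Var : Type}

theorem Term.eval_app {D : Type} (I : Sym → List D → D) (ρ : Var → D)
    (f : Sym) (args : List (Term Sym Var)) :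
    Term.eval I ρ (Term.app f args) = I f (args.map (Term.eval I ρ)) := by
  rw [Term.eval]
  exact congrArg (I f) List.attach_map_val

theorem EGraph.term_eq (G : EGraph Sym Var) (n : G.N) :
    G.term n = match G.label n with
      | Sum.inr v => Term.var v
      | Sum.inl f => Term.app f ((G.children n).map G.term) := by
  have : G.term n = match G.label n with
      | Sum.inr v => Term.var v
      | Sum.inl f => Term.app f ((G.children n).attach.map fun c => G.term c.1) := by
    haveI := G.finN
    unfold EGraph.term
    rw [WellFounded.fix_eq]
  rw [this]
  cases G.label n with
  | inl f => simp only; rw [List.attach_map_val]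
  | inr v => rfl

theorem EGraph.toexpr_eq (G : EGraph Sym Var) (rep : G.N → G.N)
    (h : G.Admissible rep) (n : G.N) :
    G.toexpr rep h n = match G.label n with
      | Sum.inr v => Term.var v
      | Sum.inl f => Term.app f ((G.children n).map fun c => G.toexpr rep h (rep c)) := by
  have : G.toexpr rep h n = match G.label n with
      | Sum.inr v => Term.var v
      | Sum.inl f => Term.app f
          ((G.children n).attach.map fun c => G.toexpr rep h (rep c.1)) := by
    haveI := G.finN
    unfold EGraph.toexpr
    rw [WellFounded.fix_eq]
  rw [this]
  cases G.label n with
  | inl f =>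
      exact congrArg (Term.app f)
        (List.attach_map_val (f := fun c => G.toexpr rep h (rep c)))
  | inr v => rfl

/-- If `eval ∘ term` respects classes, then `toexpr` evaluates like `term`. -/
theorem eval_toexpr_eq_eval_term {D : Type} (G : EGraph Sym Var)
    (rep : G.N → G.N) (h : G.Admissible rep) (I : Sym → List D → D) (ρ : Var → D)
    (hcls : ∀ n n' : G.N, G.root n = G.root n' →
      Term.eval I ρ (G.term n) = Term.eval I ρ (G.term n')) :
    ∀ n, Term.eval I ρ (G.toexpr rep h n) = Term.eval I ρ (G.term n) := by
  haveI := G.finN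
  have wf : WellFounded (Function.swap (G.repEdge rep)) :=
    wf_of_acyclic (fun a hta => h.acyclic a hta.swap)
  intro n
  induction n using wf.induction with
  | _ n ih =>
    rw [G.toexpr_eq rep h n, G.term_eq n]
    cases hl : G.label n with
    | inr v => rfl
    | inl f =>
      simp only [Term.eval_app, List.map_map]
      refine congrArg (I f) (List.map_congr_left fun c hc => ?_)
      have h1 : Term.eval I ρ (G.toexpr rep h (rep c)) =
          Term.eval I ρ (G.term (rep c)) := ih (rep c) ⟨c, hc, rfl⟩
      simp only [Function.comp]
      rw [h1]
      exact hcls (rep c) c (h.rep_mem c)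

/-- Under `SatFormula`, `term` evaluates like `toexpr`. -/
theorem eval_term_eq_eval_toexpr {D : Type} (G : EGraph Sym Var)
    (rep : G.N → G.N) (h : G.Admissible rep) (I : Sym → List D → D) (ρ : Var → D)
    (hsat : G.SatFormula rep h (∅ : Set G.N) I ρ) :
    ∀ n, Term.eval I ρ (G.term n) = Term.eval I ρ (G.toexpr rep h n) := by
  haveI := G.finN
  have hsat' : ∀ n, Term.eval I ρ (G.toexpr rep h (rep n)) =
      Term.eval I ρ (G.toexpr rep h n) := by
    intro n
    by_cases hn : n = rep n
    · rw [← hn]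
    · exact hsat n hn (Set.notMem_empty n)
  have wf : WellFounded (fun a b : G.N => a ∈ G.children b) := wf_of_acyclic G.dag
  intro n
  induction n using wf.induction with
  | _ n ih =>
    rw [G.toexpr_eq rep h n, G.term_eq n]
    cases hl : G.label n with
    | inr v => rfl
    | inl f =>
      simp only [Term.eval_app, List.map_map]
      refine congrArg (I f) (List.map_congr_left fun c hc => ?_)
      simp only [Function.comp]
      rw [ih c hc, hsat' c]

end Helpers

/-- if the egraph `G` represents the conjunction of equality literals
`lits`, and `rep` is admissible for `G`, then `toformula(rep, ∅)` is logically
equivalent to the conjunction `lits`: each Σ-structure satisfies one iff the other. -/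
theorem toformula_equiv {Sym Var : Type} (G : EGraph Sym Var)
    (lits : List (Term Sym Var × Term Sym Var))
    (hrepr : ∀ l ∈ lits, ∃ n m : G.N,
      G.term n = l.1 ∧ G.term m = l.2 ∧ G.root n = G.root m)
    (hentail : ∀ (D : Type) (I : Sym → List D → D) (ρ : Var → D),
      (∀ l ∈ lits, Term.eval I ρ l.1 = Term.eval I ρ l.2) →
      ∀ n n' : G.N, G.root n = G.root n' →
        Term.eval I ρ (G.term n) = Term.eval I ρ (G.term n'))
    (rep : G.N → G.N) (h : G.Admissible rep) :
    ∀ (D : Type) (I : Sym → List D → D) (ρ : Var → D),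
      G.SatFormula rep h (∅ : Set G.N) I ρ ↔
        (∀ l ∈ lits, Term.eval I ρ l.1 = Term.eval I ρ l.2) := by
  intro D I ρ
  constructor
  · intro hsat l hl
    obtain ⟨n, m, hn, hm, hroot⟩ := hrepr l hl
    have hsat' : ∀ k, Term.eval I ρ (G.toexpr rep h (rep k)) =
        Term.eval I ρ (G.toexpr rep h k) := by
      intro k
      by_cases hk : k = rep k
      · rw [← hk]
      · exact hsat k hk (Set.notMem_empty k)
    have e1 := eval_term_eq_eval_toexpr G rep h I ρ hsat n
    have e2 := eval_term_eq_eval_toexpr G rep h I ρ hsat m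
    have hrepnm : rep n = rep m := (h.rep_class n m).mp hroot
    rw [← hn, ← hm, e1, e2, ← hsat' n, ← hsat' m, hrepnm]
  · intro hlits n hn _
    have hcls := hentail D I ρ hlits
    have e := eval_toexpr_eq_eval_term G rep h I ρ hcls
    rw [e n, e (rep n)]
    exact hcls (rep n) n (h.rep_mem n)
end

section
/- Let G = ⟨N, E, L, root⟩ be an egraph and rep an admissible representative function for G. Then the length (number of edges) of any directed path in the graph G_rep is at most the number of equivalence classes of the relation ρ_root on N. -/
/-- the length (number of edges) of any directed path in `G_rep` is at
most the number of equivalence classes of `ρ_root` (i.e. the cardinality of the range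
of `root`). -/
theorem path_length_le_card_classes {Sym Var : Type} (G : EGraph Sym Var)
    (rep : G.N → G.N) (h : G.Admissible rep) (k : ℕ) (p : Fin (k + 1) → G.N)
    (hp : ∀ i : Fin k, G.repEdge rep (p i.castSucc) (p i.succ)) :
    k ≤ Nat.card (Set.range G.root) := by
  haveI := G.finN
  -- every node after the first step is a representative (fixed point of rep)
  have hfix : ∀ i : Fin k, rep (p i.succ) = p i.succ := by
    intro i
    obtain ⟨c, _, hc⟩ := hp i
    rw [hc, ← (h.rep_class c (rep c)).mp (h.rep_mem c).symm]
  -- chain: a < b gives a TransGen path from p a to p b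
  have chain : ∀ b : ℕ, ∀ hb : b ≤ k, ∀ a : ℕ, ∀ ha : a < b,
      Relation.TransGen (G.repEdge rep) (p ⟨a, by omega⟩) (p ⟨b, by omega⟩) := by
    intro b
    induction b with
    | zero => intro _ a ha; omega
    | succ b ih =>
      intro hb a ha
      have edge : G.repEdge rep (p ⟨b, by omega⟩) (p ⟨b + 1, by omega⟩) := by
        have := hp ⟨b, by omega⟩
        simpa [Fin.castSucc, Fin.succ, Fin.castAdd, Fin.castLE] using this
      rcases Nat.lt_or_ge a b with hab | hab
      · exact (ih (by omega) a hab).tail edge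
      · have : a = b := by omega
        subst this
        exact Relation.TransGen.single edge
  have key : ∀ i j : Fin k, (i : ℕ) < (j : ℕ) →
      G.root (p i.succ) = G.root (p j.succ) → False := by
    intro i j hlt hij
    have heq : p i.succ = p j.succ := by
      have := (h.rep_class (p i.succ) (p j.succ)).mp hij
      rwa [hfix i, hfix j] at this
    have hcyc : Relation.TransGen (G.repEdge rep) (p i.succ) (p j.succ) := by
      have := chain ((j : ℕ) + 1) (by omega) ((i : ℕ) + 1) (by omega)
      have e1 : (⟨(i : ℕ) + 1, by omega⟩ : Fin (k + 1)) = i.succ := rfl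
      have e2 : (⟨(j : ℕ) + 1, by omega⟩ : Fin (k + 1)) = j.succ := rfl
      rwa [e1, e2] at this
    rw [heq] at hcyc
    exact h.acyclic _ hcyc
  -- the map i ↦ root (p i.succ) is injective
  have hinj : Function.Injective
      (fun i : Fin k => (⟨G.root (p i.succ), ⟨_, rfl⟩⟩ : Set.range G.root)) := by
    intro i j hij
    simp only [Subtype.mk.injEq] at hij
    rcases lt_trichotomy (i : ℕ) (j : ℕ) with hlt | heq | hgt
    · exact absurd hij (fun hc => key i j hlt (congrArg Subtype.val hc))
    · exact Fin.ext heq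
    · exact absurd hij.symm (fun hc => key j i hgt (congrArg Subtype.val hc))
  have hcard : Nat.card (Fin k) = k := by simp
  rw [← hcard]
  exact Nat.card_le_card_of_injective _ hinj
end

section
/- Let G = ⟨N, E, L, root⟩ be an egraph, rep an admissible representative function for G that is maximally ground, v a logical variable, and n_v the (unique) node with L(n_v) = v. Suppose the class of n_v is ground, and let S ⊆ N be any set of nodes with n_v ∈ S. Then the variable v does not occur in the formula toformula(rep, S). (This is condition (1) of the relative-completeness theorem for QEL: a variable with a ground definition is eliminated.) -/
namespace EGraph
variable {Sym Var : Type}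

theorem rep_idem (G : EGraph Sym Var) {rep : G.N → G.N} (h : G.Admissible rep) (n : G.N) :
    rep (rep n) = rep n :=
  (h.rep_class (rep n) n).mp (h.rep_mem n)

theorem term_eq_s10 (G : EGraph Sym Var) (n : G.N) :
    G.term n = match G.label n with
      | Sum.inr v => Term.var v
      | Sum.inl f => Term.app f ((G.children n).attach.map fun c => G.term c.1) := by
  unfold term
  exact WellFounded.fix_eq _ _ _

theorem toexpr_eq_s10 (G : EGraph Sym Var) (rep : G.N → G.N) (h : G.Admissible rep) (n : G.N) :
    G.toexpr rep h n = match G.label n with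
      | Sum.inr v => Term.var v
      | Sum.inl f => Term.app f ((G.children n).attach.map fun c => G.toexpr rep h (rep c.1)) := by
  unfold toexpr
  exact WellFounded.fix_eq _ _ _

theorem groundClass_child (G : EGraph Sym Var) {n : G.N} (hcg : G.CGround n)
    {c : G.N} (hc : c ∈ G.children n) : G.GroundClass c := by
  cases hcg with
  | ground hgnd =>
      refine ⟨c, rfl, CGround.ground ?_⟩
      intro v hv
      apply hgnd v
      rw [G.term_eq_s10 n] at *
      rcases hlab : G.label n with f | w
      · exact Term.HasVar.app (List.mem_map.mpr ⟨⟨c, hc⟩, List.mem_attach _ _, rfl⟩) hv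
      · rw [G.varLeaf n w hlab] at hc; cases hc
  | app w hne hroot hcw => exact ⟨w c hc, hroot c hc, hcw c hc⟩

theorem noVar_of_cground (G : EGraph Sym Var) (rep : G.N → G.N) (h : G.Admissible rep)
    (hmax : G.MaxGround rep) :
    ∀ m, G.CGround m → ∀ v, ¬ (G.toexpr rep h m).HasVar v := by
  haveI := G.finN
  have wf : WellFounded (Function.swap (G.repEdge rep)) :=
    wf_of_acyclic (fun a hta => h.acyclic a hta.swap)
  intro m
  induction m using wf.induction with
  | _ m IH =>
    intro hcg v hv
    rw [G.toexpr_eq_s10 rep h m] at hv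
    rcases hlab : G.label m with f | w
    · rw [hlab] at hv
      cases hv with
      | app ht hvt =>
        rename_i t
        rcases List.mem_map.mp ht with ⟨⟨c, hc⟩, _, rfl⟩
        have hgc : G.GroundClass c := G.groundClass_child hcg hc
        exact IH (rep c) ⟨c, hc, rfl⟩ (hmax c hgc) v hvt
    · rw [hlab] at hv
      cases hcg with
      | ground hgnd =>
          apply hgnd w
          rw [G.term_eq_s10 m, hlab]
          exact Term.HasVar.var
      | app w' hne hroot hcw => exact hne (G.varLeaf m _ hlab)

theorem hasVar_toexpr (G : EGraph Sym Var) (rep : G.N → G.N) (h : G.Admissible rep)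
    (v : Var) :
    ∀ m, (G.toexpr rep h m).HasVar v →
      ∃ p, G.label p = Sum.inr v ∧ (p = m ∨ rep p = p) := by
  haveI := G.finN
  have wf : WellFounded (Function.swap (G.repEdge rep)) :=
    wf_of_acyclic (fun a hta => h.acyclic a hta.swap)
  intro m
  induction m using wf.induction with
  | _ m IH =>
    intro hv
    rw [G.toexpr_eq_s10 rep h m] at hv
    rcases hlab : G.label m with f | w
    · rw [hlab] at hv
      cases hv with
      | app ht hvt =>
        rcases List.mem_map.mp ht with ⟨⟨c, hc⟩, _, rfl⟩
        rcases IH (rep c) ⟨c, hc, rfl⟩ hvt with ⟨p, hp, hcase⟩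
        refine ⟨p, hp, Or.inr ?_⟩
        rcases hcase with rfl | hrep
        · exact G.rep_idem h c
        · exact hrep
    · rw [hlab] at hv
      cases hv
      exact ⟨m, hlab, Or.inl rfl⟩

end EGraph

/-- if `rep` is admissible and maximally ground, `n_v` is the unique
node labeled by the variable `v`, the class of `n_v` is ground, and `n_v ∈ S`, then
`v` does not occur in `toformula(rep, S)`. -/
theorem var_eliminated_of_ground_def {Sym Var : Type} (G : EGraph Sym Var)
    (rep : G.N → G.N) (h : G.Admissible rep) (hmax : G.MaxGround rep)
    (v : Var) (nv : G.N)
    (hlabel : G.label nv = Sum.inr v)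
    (huniq : ∀ m : G.N, G.label m = Sum.inr v → m = nv)
    (hg : G.GroundClass nv)
    (S : Set G.N) (hS : nv ∈ S) :
    ¬ G.OccursIn rep h S v := by
  rintro ⟨n, hne, hnS, hvar⟩
  have key : ∀ m : G.N, (G.toexpr rep h m).HasVar v → m = nv ∨ rep nv = nv := by
    intro m hm
    rcases G.hasVar_toexpr rep h v m hm with ⟨p, hp, hcase⟩
    have hpnv : p = nv := huniq p hp
    subst hpnv
    rcases hcase with rfl | hrep
    · exact Or.inl rfl
    · exact Or.inr hrep
  have contra : rep nv = nv → False := by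
    intro hrep
    have hcg : G.CGround nv := hrep ▸ hmax nv hg
    apply G.noVar_of_cground rep h hmax nv hcg v
    rw [G.toexpr_eq_s10 rep h nv, hlabel]
    exact Term.HasVar.var
  rcases hvar with hv1 | hv2
  · rcases key (rep n) hv1 with heq | hrep
    · apply contra
      rw [← heq]
      exact G.rep_idem h n
    · exact contra hrep
  · rcases key n hv2 with rfl | hrep
    · exact hnS hS
    · exact contra hrep
end

section
/- Every egraph G = ⟨N, E, L, root⟩ admits a representative function rep : N → N that is both admissible and maximally ground, i.e., rep assigns one representative per class with ρ_rep = ρ_root, the graph G_rep is acyclic, and for every node n whose class is ground, rep(n) is constructively ground. (This is the correctness guarantee of the finddefs procedure.) -/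
namespace EGraphProof
open EGraph

attribute [local instance] Classical.propDecidable

variable {Sym Var : Type}

theorem term_eq (G : EGraph Sym Var) (n : G.N) :
    G.term n = match G.label n with
      | Sum.inr v => Term.var v
      | Sum.inl f => Term.app f ((G.children n).attach.map fun c => G.term c.1) := by
  haveI := G.finN
  conv_lhs => rw [EGraph.term, WellFounded.fix_eq]
  rfl

def Elig (G : EGraph Sym Var) (n : G.N) : Prop := G.GroundClass n → G.CGround n

inductive Ext (G : EGraph Sym Var) : ℕ → G.N → Prop where
  | mk (k : ℕ) (n : G.N) : Elig G n →
      (j : (c : G.N) → c ∈ G.children n → ℕ) →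
      (w : (c : G.N) → c ∈ G.children n → G.N) →
      (∀ c hc, j c hc < k) →
      (∀ c hc, G.root (w c hc) = G.root c) →
      (∀ c hc, Ext G (j c hc) (w c hc)) →
      Ext G k n

theorem Ext.elig {G : EGraph Sym Var} {k : ℕ} {n : G.N} (h : Ext G k n) : Elig G n := by
  cases h; assumption

theorem Ext.intro {G : EGraph Sym Var} {k : ℕ} {n : G.N} (he : Elig G n)
    (h : ∀ c ∈ G.children n, ∃ j < k, ∃ m, G.root m = G.root c ∧ Ext G j m) :
    Ext G k n := by
  choose j hj w hw hext using h
  exact Ext.mk _ _ he j w hj hw hext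

theorem Ext.children {G : EGraph Sym Var} {k : ℕ} {n : G.N} (h : Ext G k n) :
    ∀ c ∈ G.children n, ∃ j < k, ∃ m, G.root m = G.root c ∧ Ext G j m := by
  cases h with
  | mk _ _ _ j w hj hw he => exact fun c hc => ⟨j c hc, hj c hc, w c hc, hw c hc, he c hc⟩

theorem Ext.mono {G : EGraph Sym Var} {j k : ℕ} {n : G.N} (h : Ext G j n) (hjk : j ≤ k) :
    Ext G k n := by
  refine Ext.intro h.elig fun c hc' => ?_
  obtain ⟨j', hj', hm⟩ := h.children c hc'
  exact ⟨j', lt_of_lt_of_le hj' hjk, hm⟩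

theorem listBound {α : Type} {P : α → ℕ → Prop}
    (mono : ∀ a j k, P a j → j ≤ k → P a k) :
    ∀ (l : List α), (∀ c ∈ l, ∃ k, P c k) → ∃ K, ∀ c ∈ l, P c K
  | [], _ => ⟨0, by simp⟩
  | a :: l, h => by
      obtain ⟨k, hk⟩ := h a (by simp)
      obtain ⟨K, hK⟩ := listBound mono l (fun c hc => h c (by simp [hc]))
      refine ⟨max k K, fun c hc => ?_⟩
      rcases List.mem_cons.1 hc with rfl | hc
      · exact mono _ _ _ hk (le_max_left _ _)
      · exact mono _ _ _ (hK c hc) (le_max_right _ _)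

theorem Pmono (G : EGraph Sym Var) :
    ∀ (c : G.N) (j k : ℕ), (∃ m, G.root m = G.root c ∧ Ext G j m) → j ≤ k →
      (∃ m, G.root m = G.root c ∧ Ext G k m) :=
  fun _ _ _ ⟨m, hm, he⟩ hjk => ⟨m, hm, he.mono hjk⟩

theorem ext_of_ground (G : EGraph Sym Var) :
    ∀ n : G.N, (G.term n).Ground → ∃ k, Ext G k n := by
  haveI := G.finN
  intro n
  refine (wf_of_acyclic G.dag).induction
    (C := fun n => (G.term n).Ground → ∃ k, Ext G k n) n ?_
  intro n ih hg
  have hterm := term_eq G n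
  rcases hl : G.label n with f | v
  case inr =>
    rw [hl] at hterm
    rw [hterm] at hg
    exact absurd Term.HasVar.var (hg v)
  case inl =>
    rw [hl] at hterm
    have hchild : ∀ c ∈ G.children n, (G.term c).Ground := by
      intro c hc v hv
      apply hg v
      rw [hterm]
      exact Term.HasVar.app (List.mem_map.2 ⟨⟨c, hc⟩, List.mem_attach _ _, rfl⟩) hv
    have h1 : ∀ c ∈ G.children n, ∃ k, ∃ m, G.root m = G.root c ∧ Ext G k m := by
      intro c hc
      obtain ⟨k, hk⟩ := ih c hc (hchild c hc)
      exact ⟨k, c, rfl, hk⟩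
    obtain ⟨K, hK⟩ := listBound (Pmono G) _ h1
    exact ⟨K + 1, Ext.intro (fun _ => CGround.ground hg)
      (fun c hc => ⟨K, K.lt_succ_self, hK c hc⟩)⟩

theorem cground_ext (G : EGraph Sym Var) {n : G.N} (h : G.CGround n) : ∃ k, Ext G k n := by
  induction h with
  | ground hg => exact ext_of_ground G _ hg
  | @app m w hne hroot hcg ih =>
    have h1 : ∀ c ∈ G.children m, ∃ k, ∃ m', G.root m' = G.root c ∧ Ext G k m' := by
      intro c hc
      obtain ⟨k, hk⟩ := ih c hc
      exact ⟨k, w c hc, hroot c hc, hk⟩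
    obtain ⟨K, hK⟩ := listBound (Pmono G) _ h1
    exact ⟨K + 1, Ext.intro (fun _ => CGround.app w hne hroot hcg)
      (fun c hc => ⟨K, K.lt_succ_self, hK c hc⟩)⟩

theorem exists_ext (G : EGraph Sym Var) :
    ∀ n : G.N, ∃ k, ∃ m, G.root m = G.root n ∧ Ext G k m := by
  haveI := G.finN
  intro n
  refine (wf_of_acyclic G.dag).induction
    (C := fun n => ∃ k, ∃ m, G.root m = G.root n ∧ Ext G k m) n ?_
  intro n ih
  by_cases hg : G.GroundClass n
  · obtain ⟨m, hm, hcg⟩ := hg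
    obtain ⟨k, hk⟩ := cground_ext G hcg
    exact ⟨k, m, hm, hk⟩
  · obtain ⟨K, hK⟩ := listBound (Pmono G) _ ih
    exact ⟨K + 1, n, rfl, Ext.intro (fun h => absurd h hg)
      (fun c hc => ⟨K, K.lt_succ_self, hK c hc⟩)⟩

noncomputable def F (G : EGraph Sym Var) (r : G.N) : G.N :=
  if h : ∃ k, ∃ m, G.root m = r ∧ Ext G k m then Classical.choose (Nat.find_spec h) else r

noncomputable def mu (G : EGraph Sym Var) (r : G.N) : ℕ :=
  if h : ∃ k, ∃ m, G.root m = r ∧ Ext G k m then Nat.find h else 0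

noncomputable def rep (G : EGraph Sym Var) (n : G.N) : G.N := F G (G.root n)

theorem F_spec (G : EGraph Sym Var) {r : G.N}
    (h : ∃ k, ∃ m, G.root m = r ∧ Ext G k m) :
    G.root (F G r) = r ∧ Ext G (mu G r) (F G r) := by
  simp only [F, mu, dif_pos h]
  exact Classical.choose_spec (Nat.find_spec h)

theorem mu_min (G : EGraph Sym Var) {r : G.N} {j : ℕ}
    (hj : ∃ m, G.root m = r ∧ Ext G j m) : mu G r ≤ j := by
  have h : ∃ k, ∃ m, G.root m = r ∧ Ext G k m := ⟨j, hj⟩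
  simp only [mu, dif_pos h]
  exact Nat.find_min' h hj

theorem rep_root (G : EGraph Sym Var) (n : G.N) : G.root (rep G n) = G.root n :=
  (F_spec G (exists_ext G n)).1

theorem rep_ext (G : EGraph Sym Var) (n : G.N) : Ext G (mu G (G.root n)) (rep G n) :=
  (F_spec G (exists_ext G n)).2

theorem rep_idem (G : EGraph Sym Var) (n : G.N) : rep G (rep G n) = rep G n := by
  show F G (G.root (rep G n)) = F G (G.root n)
  rw [rep_root]

theorem edge_dec (G : EGraph Sym Var) {x c : G.N} (hx : rep G x = x)
    (hc : c ∈ G.children x) :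
    mu G (G.root (rep G c)) < mu G (G.root x) := by
  have hext := rep_ext G x
  rw [hx] at hext
  obtain ⟨j, hj, hm⟩ := hext.children c hc
  have h2 : mu G (G.root c) ≤ j := mu_min G hm
  rw [rep_root]
  omega

theorem tg_rep (G : EGraph Sym Var) {a b : G.N}
    (h : Relation.TransGen (G.repEdge (rep G)) a b) : rep G b = b := by
  induction h with
  | single h => obtain ⟨c, _, rfl⟩ := h; exact rep_idem G c
  | tail _ h _ => obtain ⟨c, _, rfl⟩ := h; exact rep_idem G c

theorem tg_dec (G : EGraph Sym Var) {a b : G.N}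
    (h : Relation.TransGen (G.repEdge (rep G)) a b) (ha : rep G a = a) :
    mu G (G.root b) < mu G (G.root a) := by
  induction h with
  | single h =>
    obtain ⟨c, hc, rfl⟩ := h
    exact edge_dec G ha hc
  | tail hab h ih =>
    obtain ⟨c, hc, rfl⟩ := h
    exact lt_trans (edge_dec G (tg_rep G hab) hc) ih

end EGraphProof

/-- every egraph admits a representative function that is both
admissible and maximally ground (correctness of `finddefs`). -/
theorem exists_admissible_maxGround {Sym Var : Type} (G : EGraph Sym Var) :
    ∃ rep : G.N → G.N, G.Admissible rep ∧ G.MaxGround rep := by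
  refine ⟨EGraphProof.rep G, ⟨fun n => EGraphProof.rep_root G n, fun n n' => ⟨?_, ?_⟩, ?_⟩, ?_⟩
  · intro h
    show EGraphProof.F G (G.root n) = EGraphProof.F G (G.root n')
    rw [h]
  · intro h
    rw [← EGraphProof.rep_root G n, ← EGraphProof.rep_root G n', h]
  · intro n h
    have hn := EGraphProof.tg_rep G h
    exact absurd (EGraphProof.tg_dec G h hn) (lt_irrefl _)
  · intro n hg
    apply (EGraphProof.rep_ext G n).elig
    obtain ⟨m, hm, hcg⟩ := hg
    exact ⟨m, by rw [EGraphProof.rep_root]; exact hm, hcg⟩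
end
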